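/- Let z = |z|e^{iω} with 1/2 ≤ |z| < 1, let I be an arc of 𝕋 with |I| < 1, let n ≥ 1, and suppose e^{iω} ∈ 2^{n+1}I \ 2^n I, where 2^k I is the arc concentric with I of length 2^k|I|. Then for all e^{iθ}, e^{iφ} ∈ I and 0 ≤ γ < 1, |P_z(θ) - P_z(φ)| / |e^{iθ}-e^{iφ}|^γ ≤ C |I|^{-1-γ} / 2^{2n} for an absolute constant C (depending only on γ). -/

import Mathlib

open MeasureTheory Set

noncomputable section

def unitDisk : Set ℂ := {z : ℂ | ‖z‖ < 1}

def carlesonSquare (a b : ℝ) : Set ℂ :=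
  {z : ℂ | ∃ r t : ℝ, a ≤ t ∧ t ≤ b ∧ 1 - (b - a) / (2 * Real.pi) ≤ r ∧ r < 1 ∧
    z = (r : ℂ) * Complex.exp (t * Complex.I)}

/-- `μ` is an `s`-Carleson measure. -/
def IsCarleson (μ : Measure ℂ) (s : ℝ) : Prop :=
  ∃ C > 0, ∀ a b : ℝ, a < b → b - a ≤ 2 * Real.pi →
    (μ (carlesonSquare a b)).toReal ≤ C * (b - a) ^ s

/-- Poisson kernel `P_z(θ)`. -/
def poissonKernelDisk (z : ℂ) (θ : ℝ) : ℝ :=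
  (1 - (‖z‖) ^ 2) / (‖1 - z * Complex.exp (-(θ * Complex.I))‖) ^ 2

/-- The balayage `S_μ(e^{it})`. -/
def balayage (μ : Measure ℂ) (t : ℝ) : ℝ :=
  ∫ z in unitDisk, poissonKernelDisk z t ∂μ

/-- The hyperbolic metric `β(z,w)`. -/
def hypDist (z w : ℂ) : ℝ :=
  (1 / 2) * Real.log ((1 + ‖(z - w) / (1 - (starRingEnd ℂ) z * w)‖) /
    (1 - ‖(z - w) / (1 - (starRingEnd ℂ) z * w)‖))

/-- Normalized area measure `dA` on `ℂ` (so that the unit disk has measure 1). -/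
def areaM : Measure ℂ := (ENNReal.ofReal Real.pi)⁻¹ • MeasureTheory.volume

/-- The B-balayage `G_μ`. -/
def bBalayage (μ : Measure ℂ) (z : ℂ) : ℝ :=
  ∫ w in unitDisk, (1 - (‖w‖) ^ 2) ^ 2 /
    (‖1 - (starRingEnd ℂ) z * w‖) ^ 4 ∂μ

/-!
Writing `A_ψ = |e^{iψ} - z|`, one has `P_z(ψ) = (1 - |z|²) / A_ψ²`, and since `1 - |z| ≤ A_ψ` and
`|A_θ - A_φ| ≤ |e^{iθ} - e^{iφ}|`, the difference `P_z(θ) - P_z(φ)` is at most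
`4 |e^{iθ} - e^{iφ}| / (A_θ A_φ)`. For `e^{iψ} ∈ I` the angle `ψ - ω` is comparable to `2ⁿ|I|`, and so
is `A_ψ` because `|e^{iψ} - r e^{iω}|² = (1 - r)² + r |e^{iψ} - e^{iω}|²`. Finally
`|e^{iθ} - e^{iφ}|^{1-γ} ≤ |I|^{1-γ}`.
-/

open Complex

namespace Real

lemma sq_div_sixteen_le_one_sub_cos {x : ℝ} (hx : |x| ≤ 5 * π / 4) : x ^ 2 / 16 ≤ 1 - cos x := by
  have hπ := pi_lt_d2
  rcases le_or_gt |x| π with hxπ | hxπ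
  · have hquad := cos_le_one_sub_mul_cos_sq hxπ
    have hcoef : 1 / 16 ≤ 2 / π ^ 2 := by
      rw [div_le_div_iff₀ (by norm_num) (by positivity)]
      nlinarith [pi_pos]
    nlinarith [sq_nonneg x]
  · have hcos : cos x ≤ 0 := by
      rw [← cos_abs]
      exact cos_nonpos_of_pi_div_two_le_of_le (by linarith [pi_pos]) (by linarith [pi_pos])
    have hsq : x ^ 2 ≤ (5 * π / 4) ^ 2 := by
      rw [← sq_abs]
      exact pow_le_pow_left₀ (abs_nonneg x) hx 2
    nlinarith

lemma mul_rpow_neg_le_rpow_one_sub {x y γ : ℝ} (hx : 0 ≤ x) (hxy : x ≤ y) (hγ : γ < 1) :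
    x * x ^ (-γ) ≤ y ^ (1 - γ) := by
  rw [← rpow_one_add' hx (by linarith), ← sub_eq_add_neg]
  exact rpow_le_rpow hx hxy (by linarith)

end Real

lemma norm_sub_smul_sq_of_norm_eq_one {F : Type*} [NormedAddCommGroup F] [InnerProductSpace ℝ F]
    {u w : F} (hu : ‖u‖ = 1) (hw : ‖w‖ = 1) (r : ℝ) :
    ‖u - r • w‖ ^ 2 = (1 - r) ^ 2 + r * ‖u - w‖ ^ 2 := by
  rw [norm_sub_sq_real, norm_sub_sq_real, inner_smul_right, norm_smul, hu, hw, mul_pow,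
    Real.norm_eq_abs, sq_abs]
  ring

namespace Complex

lemma norm_exp_ofReal_mul_I_sub_exp_sq (x y : ℝ) :
    ‖exp (x * I) - exp (y * I)‖ ^ 2 = 2 * (1 - Real.cos (x - y)) := by
  rw [Complex.sq_norm, normSq_apply]
  simp only [sub_re, sub_im, exp_ofReal_mul_I_re, exp_ofReal_mul_I_im]
  linear_combination Real.sin_sq_add_cos_sq x + Real.sin_sq_add_cos_sq y + 2 * Real.cos_sub x y

lemma norm_exp_ofReal_mul_I_sub_exp_le (x y : ℝ) : ‖exp (x * I) - exp (y * I)‖ ≤ |x - y| := by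
  rw [← pow_le_pow_iff_left₀ (norm_nonneg _) (abs_nonneg _) two_ne_zero, sq_abs,
    norm_exp_ofReal_mul_I_sub_exp_sq]
  linarith [Real.one_sub_sq_div_two_le_cos (x := x - y)]

lemma abs_sub_div_four_le_norm_exp_sub_ofReal_mul_exp {r ψ ω : ℝ} (hr : 1 / 2 ≤ r)
    (h : |ψ - ω| ≤ 5 * Real.pi / 4) : |ψ - ω| / 4 ≤ ‖exp (ψ * I) - r * exp (ω * I)‖ := by
  rw [← pow_le_pow_iff_left₀ (by positivity) (norm_nonneg _) two_ne_zero,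
    show (r : ℂ) * exp (ω * I) = r • exp (ω * I) from real_smul.symm,
    norm_sub_smul_sq_of_norm_eq_one (norm_exp_ofReal_mul_I ψ) (norm_exp_ofReal_mul_I ω),
    norm_exp_ofReal_mul_I_sub_exp_sq, div_pow, sq_abs]
  nlinarith [Real.sq_div_sixteen_le_one_sub_cos h, sq_nonneg (1 - r)]

lemma norm_one_sub_mul_exp_neg (z : ℂ) (ψ : ℝ) :
    ‖1 - z * exp (-(ψ * I))‖ = ‖exp (ψ * I) - z‖ := by
  rw [← one_mul ‖1 - _‖, ← norm_exp_ofReal_mul_I ψ, ← norm_mul, mul_sub, mul_one, mul_left_comm,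
    ← exp_add, add_neg_cancel, exp_zero, mul_one]

end Complex

lemma poissonKernelDisk_eq (z : ℂ) (ψ : ℝ) :
    poissonKernelDisk z ψ = (1 - ‖z‖ ^ 2) / ‖exp (ψ * I) - z‖ ^ 2 := by
  rw [poissonKernelDisk, norm_one_sub_mul_exp_neg]

lemma abs_poissonKernelDisk_sub_le {z : ℂ} (hz : ‖z‖ < 1) (θ φ : ℝ) :
    |poissonKernelDisk z θ - poissonKernelDisk z φ| ≤
      4 * ‖exp (θ * I) - exp (φ * I)‖ / (‖exp (θ * I) - z‖ * ‖exp (φ * I) - z‖) := by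
  have hdist_boundary : ∀ ψ : ℝ, 1 - ‖z‖ ≤ ‖exp (ψ * I) - z‖ := fun ψ => by
    simpa only [norm_exp_ofReal_mul_I] using norm_sub_norm_le (exp (ψ * I)) z
  have hab : |‖exp (φ * I) - z‖ - ‖exp (θ * I) - z‖| ≤ ‖exp (θ * I) - exp (φ * I)‖ := by
    rw [abs_sub_comm]
    simpa only [sub_sub_sub_cancel_right] using
      abs_norm_sub_norm_le (exp (θ * I) - z) (exp (φ * I) - z)
  rw [poissonKernelDisk_eq, poissonKernelDisk_eq]
  set E := ‖exp (θ * I) - exp (φ * I)‖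
  set a := ‖exp (θ * I) - z‖
  set b := ‖exp (φ * I) - z‖
  have ha : 1 - ‖z‖ ≤ a := hdist_boundary θ
  have hb : 1 - ‖z‖ ≤ b := hdist_boundary φ
  have ha0 : 0 < a := by linarith
  have hb0 : 0 < b := by linarith
  have hnum : (1 - ‖z‖ ^ 2) * (a + b) ≤ 4 * (a * b) := by
    have hsum : (1 - ‖z‖) * (a + b) ≤ 2 * (a * b) := by
      linarith [mul_le_mul_of_nonneg_right hb ha0.le, mul_le_mul_of_nonneg_right ha hb0.le]
    calc (1 - ‖z‖ ^ 2) * (a + b) = (1 + ‖z‖) * ((1 - ‖z‖) * (a + b)) := by ring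
      _ ≤ 2 * (2 * (a * b)) :=
        mul_le_mul (by linarith) hsum (mul_nonneg (by linarith) (by positivity)) zero_le_two
      _ = 4 * (a * b) := by ring
  have hdiff : (1 - ‖z‖ ^ 2) / a ^ 2 - (1 - ‖z‖ ^ 2) / b ^ 2 =
      (1 - ‖z‖ ^ 2) * (a + b) * (b - a) / (a * b) ^ 2 := by
    field_simp
    ring
  have hz2 : 0 ≤ 1 - ‖z‖ ^ 2 := by nlinarith [norm_nonneg z]
  rw [hdiff, abs_div, abs_mul, abs_of_nonneg (mul_nonneg hz2 (by positivity)),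
    abs_of_pos (by positivity : 0 < (a * b) ^ 2), div_le_div_iff₀ (by positivity) (by positivity)]
  calc (1 - ‖z‖ ^ 2) * (a + b) * |b - a| * (a * b) ≤ 4 * (a * b) * E * (a * b) := by gcongr
    _ = 4 * E * (a * b) ^ 2 := by ring

lemma dyadic_angle_bounds {ω c L Δ ψ : ℝ} (hΔ : 2 * L ≤ Δ) (hlow : Δ / 2 ≤ |ω - c|)
    (hupp : |ω - c| ≤ Δ) (hψ : ψ ∈ Set.Ioo (c - L / 2) (c + L / 2)) :
    Δ / 4 ≤ |ψ - ω| ∧ |ψ - ω| ≤ 5 * Δ / 4 := by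
  have hψc : |ψ - c| < L / 2 := abs_sub_lt_iff.2 ⟨by linarith [hψ.2], by linarith [hψ.1]⟩
  have h₁ := abs_sub_abs_le_abs_sub (ω - c) (ψ - c)
  have h₂ := abs_sub_le ψ c ω
  rw [sub_sub_sub_cancel_right, abs_sub_comm ω ψ] at h₁
  rw [abs_sub_comm c ω] at h₂
  constructor <;> linarith

theorem poisson_diff_dyadic_bound_general (γ : ℝ) (hγ1 : γ < 1) :
    ∃ C > 0, ∀ (r ω c L : ℝ) (n : ℕ), 1 ≤ n →
      1 / 2 ≤ r → r < 1 → 0 < L → L < 1 →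
      2 ^ (n + 1) * L ≤ 2 * Real.pi →
      2 ^ n * L / 2 ≤ |ω - c| → |ω - c| ≤ 2 ^ n * L →
      ∀ θ φ : ℝ, θ ∈ Set.Ioo (c - L / 2) (c + L / 2) →
        φ ∈ Set.Ioo (c - L / 2) (c + L / 2) →
        |poissonKernelDisk ((r : ℂ) * Complex.exp (ω * Complex.I)) θ -
          poissonKernelDisk ((r : ℂ) * Complex.exp (ω * Complex.I)) φ| *
          (‖Complex.exp (θ * Complex.I) - Complex.exp (φ * Complex.I)‖) ^ (-γ)
          ≤ C * L ^ (-1 - γ) / 2 ^ (2 * n) := by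
  refine ⟨1024, by norm_num, ?_⟩
  intro r ω c L n hn hr hr1 hL _ h2π hlow hupp θ φ hθ hφ
  set z : ℂ := r * exp (ω * I)
  set Δ : ℝ := 2 ^ n * L
  set E := ‖exp (θ * I) - exp (φ * I)‖
  have hz : ‖z‖ < 1 := by
    rwa [norm_mul, norm_exp_ofReal_mul_I, mul_one, norm_real, Real.norm_of_nonneg (by linarith)]
  have h2n : (2 : ℝ) ≤ 2 ^ n := by simpa using pow_le_pow_right₀ one_le_two hn
  have hLΔ : 2 * L ≤ Δ := by nlinarith
  have hΔπ : Δ ≤ Real.pi := by rw [pow_succ] at h2π; nlinarith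
  have hnear : ∀ ψ ∈ Set.Ioo (c - L / 2) (c + L / 2), Δ / 16 ≤ ‖exp (ψ * I) - z‖ := by
    intro ψ hψ
    obtain ⟨hfar, hclose⟩ := dyadic_angle_bounds hLΔ hlow hupp hψ
    linarith [abs_sub_div_four_le_norm_exp_sub_ofReal_mul_exp hr (hclose.trans (by linarith))]
  have hEL : E ≤ L := (norm_exp_ofReal_mul_I_sub_exp_le θ φ).trans
    (abs_sub_lt_iff.2 ⟨by linarith [hθ.2, hφ.1], by linarith [hθ.1, hφ.2]⟩).le
  calc |poissonKernelDisk z θ - poissonKernelDisk z φ| * E ^ (-γ)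
      ≤ 4 * E / (‖exp (θ * I) - z‖ * ‖exp (φ * I) - z‖) * E ^ (-γ) := by
        gcongr
        exact abs_poissonKernelDisk_sub_le hz θ φ
    _ ≤ 4 * E / (Δ / 16 * (Δ / 16)) * E ^ (-γ) := by
        gcongr
        exacts [hnear θ hθ, hnear φ hφ]
    _ = 1024 * (E * E ^ (-γ)) / Δ ^ 2 := by ring
    _ ≤ 1024 * L ^ (1 - γ) / Δ ^ 2 := by
        gcongr
        exact Real.mul_rpow_neg_le_rpow_one_sub (norm_nonneg _) hEL hγ1
    _ = 1024 * L ^ (-1 - γ) / 2 ^ (2 * n) := by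
        rw [show 1 - γ = -1 - γ + 2 by ring, Real.rpow_add hL, Real.rpow_two,
          show Δ ^ 2 = 2 ^ (2 * n) * L ^ 2 by rw [pow_mul']; ring]
        field_simp

/-- Case (ii) estimate: if e^{iω} ∈ 2^{n+1}I \ 2^n I then for e^{iθ}, e^{iφ} ∈ I,
|P_z(θ)-P_z(φ)|/|e^{iθ}-e^{iφ}|^γ ≤ C |I|^{-1-γ}/2^{2n}. -/
theorem poisson_diff_dyadic_bound (γ : ℝ) (hγ0 : 0 ≤ γ) (hγ1 : γ < 1) :
    ∃ C > 0, ∀ (r ω c L : ℝ) (n : ℕ), 1 ≤ n →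
      1 / 2 ≤ r → r < 1 → 0 < L → L < 1 →
      2 ^ (n + 1) * L ≤ 2 * Real.pi →
      2 ^ n * L / 2 ≤ |ω - c| → |ω - c| ≤ 2 ^ n * L →
      ∀ θ φ : ℝ, θ ∈ Set.Ioo (c - L / 2) (c + L / 2) →
        φ ∈ Set.Ioo (c - L / 2) (c + L / 2) →
        |poissonKernelDisk ((r : ℂ) * Complex.exp (ω * Complex.I)) θ -
          poissonKernelDisk ((r : ℂ) * Complex.exp (ω * Complex.I)) φ| *
          (‖Complex.exp (θ * Complex.I) - Complex.exp (φ * Complex.I)‖) ^ (-γ)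
          ≤ C * L ^ (-1 - γ) / 2 ^ (2 * n) :=
  poisson_diff_dyadic_bound_general γ hγ1
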